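/- Let C_1,...,C_m be closed convex subsets of a real Hilbert space H with C := ∩C_i ≠ ∅, and let y_k := (P_{C_m} ⋯ P_{C_1})^k(y_0). Then for every k ≥ 1, (1/m)∑_{i=1}^m d(y_k, C_i)² ≤ (m/2)·‖y_k − y_{k−1}‖·d(y_{k−1}, C). -/

import Mathlib

noncomputable section
open Filter Metric

variable {H : Type} [NormedAddCommGroup H] [InnerProductSpace ℝ H] [CompleteSpace H]

/-- `cyclicComp P j` is the composition of the first `j` of the maps `P 0, …, P (m-1)`
(with `P 0` applied first).  In particular `cyclicComp P m = P_{C_m} ∘ ⋯ ∘ P_{C_1}` is one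
full sweep of the method of cyclic projections, and `cyclicComp P i` is the partial
product `Q_i = P_{C_i} ⋯ P_{C_1}` (with `cyclicComp P 0 = Q_0 = I`). -/
def cyclicComp {m : ℕ} (P : Fin m → H → H) (j : ℕ) : H → H :=
  fun x => ((List.ofFn P).take j).foldl (fun a p => p a) x

/-- `P i` is the metric (nearest-point) projection onto the set `C i`, for each `i`. -/
def IsMetricProj {m : ℕ} (C : Fin m → Set H) (P : Fin m → H → H) : Prop :=
  ∀ i x, P i x ∈ C i ∧ ∀ y ∈ C i, ‖x - P i x‖ ≤ ‖x - y‖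

set_option linter.unusedSectionVars false

lemma proj_var {S : Set H} (hc : Convex ℝ S) {x p : H} (hp : p ∈ S)
    (hmin : ∀ z ∈ S, ‖x - p‖ ≤ ‖x - z‖) : ∀ z ∈ S, inner ℝ (x - p) (z - p) ≤ (0 : ℝ) := by
  haveI : Nonempty S := ⟨⟨p, hp⟩⟩
  have hnorm : ‖x - p‖ = ⨅ w : S, ‖x - w‖ := by
    apply le_antisymm
    · exact le_ciInf fun w => hmin w w.2
    · have hbdd : BddBelow (Set.range fun w : S => ‖x - w‖) := by
        refine ⟨0, ?_⟩
        rintro y ⟨w, rfl⟩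
        exact norm_nonneg _
      exact ciInf_le hbdd ⟨p, hp⟩
  exact (norm_eq_iInf_iff_real_inner_le_zero hc hp).1 hnorm

lemma proj_firm {S : Set H} (hc : Convex ℝ S) {x p : H} (hp : p ∈ S)
    (hmin : ∀ z ∈ S, ‖x - p‖ ≤ ‖x - z‖) {c : H} (hcS : c ∈ S) :
    ‖p - c‖ ^ 2 + ‖x - p‖ ^ 2 ≤ ‖x - c‖ ^ 2 := by
  have h := proj_var hc hp hmin c hcS
  have e : x - c = (x - p) + (p - c) := by abel
  have hexp : ‖x - c‖ ^ 2 = ‖x - p‖ ^ 2 + 2 * inner ℝ (x - p) (p - c) + ‖p - c‖ ^ 2 := by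
    rw [e, @norm_add_sq_real]
  have h2 : (inner ℝ (x - p) (p - c) : ℝ) = - inner ℝ (x - p) (c - p) := by
    rw [← inner_neg_right]; congr 1; abel
  rw [h2] at hexp
  linarith [hexp, h]

lemma proj_nonexp {S : Set H} (hc : Convex ℝ S) {x y p q : H} (hp : p ∈ S) (hq : q ∈ S)
    (hminx : ∀ z ∈ S, ‖x - p‖ ≤ ‖x - z‖) (hminy : ∀ z ∈ S, ‖y - q‖ ≤ ‖y - z‖) :
    ‖p - q‖ ≤ ‖x - y‖ := by
  have h1 := proj_var hc hp hminx q hq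
  have h2 := proj_var hc hq hminy p hp
  have key : ‖p - q‖ ^ 2 ≤ inner ℝ (x - y) (p - q) := by
    have e : (inner ℝ (x - y) (p - q) : ℝ)
        = inner ℝ (x - p) (p - q) + inner ℝ (p - q) (p - q) + inner ℝ (q - y) (p - q) := by
      rw [← inner_add_left, ← inner_add_left]; congr 1; abel
    have e1 : (inner ℝ (x - p) (p - q) : ℝ) = - inner ℝ (x - p) (q - p) := by
      rw [← inner_neg_right]; congr 1; abel
    have e2 : (inner ℝ (q - y) (p - q) : ℝ) = - inner ℝ (y - q) (p - q) := by
      rw [← inner_neg_left]; congr 1; abel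
    have e3 : (inner ℝ (p - q) (p - q) : ℝ) = ‖p - q‖ ^ 2 := real_inner_self_eq_norm_sq _
    linarith
  have h3 : (inner ℝ (x - y) (p - q) : ℝ) ≤ ‖x - y‖ * ‖p - q‖ := real_inner_le_norm _ _
  nlinarith [norm_nonneg (p - q), norm_nonneg (x - y)]

lemma cyclicComp_zero {m : ℕ} (P : Fin m → H → H) (x : H) : cyclicComp P 0 x = x := rfl

lemma cyclicComp_succ {m : ℕ} (P : Fin m → H → H) {j : ℕ} (hj : j < m) (x : H) :
    cyclicComp P (j + 1) x = P ⟨j, hj⟩ (cyclicComp P j x) := by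
  unfold cyclicComp
  have hlen : j < (List.ofFn P).length := by simpa using hj
  rw [List.take_succ, List.getElem?_eq_getElem hlen]
  simp [List.foldl_append]

lemma cyclicComp_mem {m : ℕ} {C : Fin m → Set H} {P : Fin m → H → H}
    (hP : IsMetricProj C P) {j : ℕ} (hj : j < m) (x : H) :
    cyclicComp P (j + 1) x ∈ C ⟨j, hj⟩ := by
  rw [cyclicComp_succ P hj]; exact (hP _ _).1

lemma sweep_sum_sq {m : ℕ} {C : Fin m → Set H} {P : Fin m → H → H}
    (hconv : ∀ i, Convex ℝ (C i)) (hP : IsMetricProj C P) (u : H) {c : H}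
    (hc : c ∈ ⋂ i, C i) :
    ∀ n, n ≤ m →
      (∑ j ∈ Finset.range n, ‖cyclicComp P (j + 1) u - cyclicComp P j u‖ ^ 2)
        + ‖cyclicComp P n u - c‖ ^ 2 ≤ ‖u - c‖ ^ 2 := by
  intro n hn
  induction n with
  | zero => simp [cyclicComp_zero]
  | succ n ih =>
    have hnm : n < m := hn
    have ih' := ih hnm.le
    have hcC : c ∈ C ⟨n, hnm⟩ := Set.mem_iInter.1 hc _
    have hstep := proj_firm (hconv ⟨n, hnm⟩) ((hP ⟨n, hnm⟩ (cyclicComp P n u)).1)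
      ((hP ⟨n, hnm⟩ (cyclicComp P n u)).2) hcC
    rw [← cyclicComp_succ P hnm] at hstep
    rw [Finset.sum_range_succ]
    have hrev : ‖cyclicComp P (n + 1) u - cyclicComp P n u‖ ^ 2
        = ‖cyclicComp P n u - cyclicComp P (n + 1) u‖ ^ 2 := by rw [norm_sub_rev]
    linarith [hstep, ih', hrev]

lemma sweep_bound {m : ℕ} {C : Fin m → Set H} {P : Fin m → H → H}
    (hconv : ∀ i, Convex ℝ (C i)) (hP : IsMetricProj C P) (u : H) {c : H}
    (hc : c ∈ ⋂ i, C i) :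
    ∑ j ∈ Finset.range m, ‖cyclicComp P (j + 1) u - cyclicComp P j u‖ ^ 2
      ≤ 2 * ‖cyclicComp P m u - u‖ * ‖u - c‖ := by
  have h := sweep_sum_sq hconv hP u hc m le_rfl
  set a := ‖u - c‖ with ha'
  set b := ‖cyclicComp P m u - c‖ with hb'
  set t := ‖cyclicComp P m u - u‖ with ht'
  have htri : a ≤ t + b := by
    calc a = ‖(u - cyclicComp P m u) + (cyclicComp P m u - c)‖ := by rw [ha']; congr 1; abel
      _ ≤ ‖u - cyclicComp P m u‖ + b := norm_add_le _ _
      _ = t + b := by rw [norm_sub_rev]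
  have hb : (0:ℝ) ≤ b := norm_nonneg _
  have ha : (0:ℝ) ≤ a := norm_nonneg _
  have ht : (0:ℝ) ≤ t := norm_nonneg _
  have hsumnn : (0:ℝ) ≤ ∑ j ∈ Finset.range m, ‖cyclicComp P (j + 1) u - cyclicComp P j u‖ ^ 2 :=
    Finset.sum_nonneg fun j _ => sq_nonneg _
  have hba : b ≤ a := by nlinarith
  nlinarith [mul_nonneg (by linarith : (0:ℝ) ≤ t + b - a) (by linarith : (0:ℝ) ≤ a + b),
    mul_nonneg (by linarith : (0:ℝ) ≤ a - b) ht]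

lemma cyclicComp_nonexp {m : ℕ} {C : Fin m → Set H} {P : Fin m → H → H}
    (hconv : ∀ i, Convex ℝ (C i)) (hP : IsMetricProj C P) (u v : H) :
    ∀ n, n ≤ m → ‖cyclicComp P n u - cyclicComp P n v‖ ≤ ‖u - v‖ := by
  intro n hn
  induction n with
  | zero => simp [cyclicComp_zero]
  | succ n ih =>
    have hnm : n < m := hn
    rw [cyclicComp_succ P hnm, cyclicComp_succ P hnm]
    exact le_trans (proj_nonexp (hconv _) (hP _ _).1 (hP _ _).1 (hP _ _).2 (hP _ _).2)
      (ih hnm.le)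

lemma le_mul_infDist {s : Set H} (hs : s.Nonempty) {x : H} {S K : ℝ} (hK : 0 ≤ K)
    (h : ∀ c ∈ s, S ≤ K * ‖x - c‖) : S ≤ K * infDist x s := by
  rcases hK.eq_or_lt with h0 | h0
  · obtain ⟨c, hc⟩ := hs
    have hx := h c hc
    rw [← h0] at hx ⊢
    simpa using hx
  · have hdiv : S / K ≤ infDist x s := by
      rw [infDist_eq_iInf]
      haveI : Nonempty s := hs.to_subtype
      refine le_ciInf fun c => ?_
      rw [div_le_iff₀ h0, dist_eq_norm]
      linarith [h c c.2]
    calc S = K * (S / K) := by field_simp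
      _ ≤ K * infDist x s := mul_le_mul_of_nonneg_left hdiv hK

lemma minsum : ∀ m : ℕ, 4 * ∑ i ∈ Finset.range m, min (m - (i + 1)) (i + 1) ≤ m * m := by
  intro m
  induction m using Nat.strong_induction_on with
  | _ m ih =>
    match m with
    | 0 => simp
    | 1 => simp
    | (n + 2) =>
      have h := ih n (by omega)
      have e1 : ∑ i ∈ Finset.range (n + 2), min (n + 2 - (i + 1)) (i + 1)
          = (∑ i ∈ Finset.range n, min (n - (i + 1)) (i + 1)) + n + 1 := by
        rw [Finset.sum_range_succ']
        have e0 : min (n + 2 - (0 + 1)) (0 + 1) = 1 := by omega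
        rw [e0, Finset.sum_range_succ]
        have elast : min (n + 2 - (n + 1 + 1)) (n + 1 + 1) = 0 := by omega
        rw [elast]
        have eterm : ∀ i ∈ Finset.range n,
            min (n + 2 - (i + 1 + 1)) (i + 1 + 1) = min (n - (i + 1)) (i + 1) + 1 := by
          intro i hi
          have hi' : i < n := Finset.mem_range.1 hi
          omega
        rw [Finset.sum_congr rfl eterm, Finset.sum_add_distrib, Finset.sum_const,
          Finset.card_range, smul_eq_mul, mul_one]
      rw [e1]
      have : (n + 2) * (n + 2) = n * n + 4 * n + 4 := by ring
      omega

/-- For closed convex sets `C₁,…,Cₘ` with nonempty intersection `C`, the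
cyclic projection iterates satisfy, for every `k ≥ 1` (here `k+1` plays the role of `k`):
`(1/m)∑ᵢ d(y_k, Cᵢ)² ≤ (m/2)·‖y_k − y_{k−1}‖·d(y_{k−1}, C)`. -/
theorem avg_sq_dist_le_increment {m : ℕ} (C : Fin m → Set H)
    (hconv : ∀ i, Convex ℝ (C i)) (hclosed : ∀ i, IsClosed (C i))
    (hne : (⋂ i, C i).Nonempty)
    (P : Fin m → H → H) (hP : IsMetricProj C P) (y₀ : H) (k : ℕ) :
    ((1 : ℝ) / m) * ∑ i : Fin m, infDist ((cyclicComp P m)^[k + 1] y₀) (C i) ^ 2 ≤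
      ((m : ℝ) / 2) * ‖(cyclicComp P m)^[k + 1] y₀ - (cyclicComp P m)^[k] y₀‖ *
        infDist ((cyclicComp P m)^[k] y₀) (⋂ i, C i) := by
  rcases Nat.eq_zero_or_pos m with hm | hm
  · subst hm; simp
  have hm0 : (m : ℝ) ≠ 0 := by positivity
  set F := cyclicComp P m with hF
  set x := F^[k] y₀ with hx
  set y := F^[k + 1] y₀ with hy
  have hyx : y = F x := by rw [hy, hx, Function.iterate_succ_apply']
  have hFmx : cyclicComp P m x = y := by rw [hyx, hF]
  have ht : (0 : ℝ) ≤ ‖y - x‖ := norm_nonneg _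
  have hd : (0 : ℝ) ≤ infDist x (⋂ i, C i) := infDist_nonneg
  have hD0 : (0 : ℝ) ≤ 2 * ‖y - x‖ * infDist x (⋂ i, C i) := by positivity
  -- forward sweep bound
  have hSf : ∑ j ∈ Finset.range m, ‖cyclicComp P (j + 1) x - cyclicComp P j x‖ ^ 2
      ≤ 2 * ‖y - x‖ * infDist x (⋂ i, C i) := by
    have h1 : ∑ j ∈ Finset.range m, ‖cyclicComp P (j + 1) x - cyclicComp P j x‖ ^ 2
        ≤ 2 * ‖cyclicComp P m x - x‖ * infDist x (⋂ i, C i) :=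
      le_mul_infDist hne (by positivity) fun c hc => sweep_bound hconv hP x hc
    rwa [hFmx] at h1
  -- Fejér monotonicity
  have hfej : infDist y (⋂ i, C i) ≤ infDist x (⋂ i, C i) := by
    have h1 : infDist y (⋂ i, C i) ≤ 1 * infDist x (⋂ i, C i) := by
      apply le_mul_infDist hne zero_le_one
      intro c hc
      have h2 : infDist y (⋂ i, C i) ≤ dist y c := infDist_le_dist_of_mem hc
      rw [dist_eq_norm] at h2
      have h3 : ‖cyclicComp P m x - c‖ ≤ ‖x - c‖ := by
        have h4 := sweep_sum_sq hconv hP x hc m le_rfl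
        have h5 : (0 : ℝ) ≤ ∑ j ∈ Finset.range m,
            ‖cyclicComp P (j + 1) x - cyclicComp P j x‖ ^ 2 :=
          Finset.sum_nonneg fun j _ => sq_nonneg _
        nlinarith [norm_nonneg (cyclicComp P m x - c), norm_nonneg (x - c)]
      rw [hFmx] at h3
      rw [one_mul]
      linarith
    rwa [one_mul] at h1
  -- backward sweep bound
  have hSb : ∑ j ∈ Finset.range m, ‖cyclicComp P (j + 1) y - cyclicComp P j y‖ ^ 2
      ≤ 2 * ‖y - x‖ * infDist x (⋂ i, C i) := by
    have h1 : ∑ j ∈ Finset.range m, ‖cyclicComp P (j + 1) y - cyclicComp P j y‖ ^ 2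
        ≤ 2 * ‖cyclicComp P m y - y‖ * infDist y (⋂ i, C i) :=
      le_mul_infDist hne (by positivity) fun c hc => sweep_bound hconv hP y hc
    have h2 : ‖cyclicComp P m y - y‖ ≤ ‖y - x‖ := by
      have h3 := cyclicComp_nonexp hconv hP y x m le_rfl
      rwa [hFmx] at h3
    have h4 : 2 * ‖cyclicComp P m y - y‖ * infDist y (⋂ i, C i)
        ≤ 2 * ‖y - x‖ * infDist x (⋂ i, C i) := by
      have := mul_le_mul (by linarith : 2 * ‖cyclicComp P m y - y‖ ≤ 2 * ‖y - x‖) hfej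
        infDist_nonneg (by positivity)
      linarith
    linarith
  -- per-index bound
  have hper : ∀ i : Fin m, infDist y (C i) ^ 2
      ≤ ((min (m - (i.1 + 1)) (i.1 + 1) : ℕ) : ℝ) *
        (2 * ‖y - x‖ * infDist x (⋂ i, C i)) := by
    intro i
    have hi1 : i.1 + 1 ≤ m := i.2
    -- forward estimate
    have hsqf : infDist y (C i) ^ 2 ≤ ((m - (i.1 + 1) : ℕ) : ℝ) *
        (2 * ‖y - x‖ * infDist x (⋂ i, C i)) := by
      have hmemf : cyclicComp P (i.1 + 1) x ∈ C i := cyclicComp_mem hP i.2 x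
      have h1 : infDist y (C i) ≤ ‖y - cyclicComp P (i.1 + 1) x‖ := by
        have h0 := infDist_le_dist_of_mem (x := y) hmemf
        rwa [dist_eq_norm] at h0
      have h2 : y - cyclicComp P (i.1 + 1) x = ∑ j ∈ Finset.Ico (i.1 + 1) m,
          (cyclicComp P (j + 1) x - cyclicComp P j x) := by
        rw [Finset.sum_Ico_eq_sub _ hi1, Finset.sum_range_sub (fun j => cyclicComp P j x),
          Finset.sum_range_sub (fun j => cyclicComp P j x), hFmx]
        abel
      have h3 : infDist y (C i) ≤ ∑ j ∈ Finset.Ico (i.1 + 1) m,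
          ‖cyclicComp P (j + 1) x - cyclicComp P j x‖ := by
        calc infDist y (C i) ≤ ‖y - cyclicComp P (i.1 + 1) x‖ := h1
          _ = ‖∑ j ∈ Finset.Ico (i.1 + 1) m,
              (cyclicComp P (j + 1) x - cyclicComp P j x)‖ := by rw [h2]
          _ ≤ _ := norm_sum_le _ _
      have h4 : infDist y (C i) ^ 2 ≤ (∑ j ∈ Finset.Ico (i.1 + 1) m,
          ‖cyclicComp P (j + 1) x - cyclicComp P j x‖) ^ 2 :=
        pow_le_pow_left₀ infDist_nonneg h3 2
      have h5 := sq_sum_le_card_mul_sum_sq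
        (s := Finset.Ico (i.1 + 1) m)
        (f := fun j => ‖cyclicComp P (j + 1) x - cyclicComp P j x‖)
      have h6 : ∑ j ∈ Finset.Ico (i.1 + 1) m,
          ‖cyclicComp P (j + 1) x - cyclicComp P j x‖ ^ 2
          ≤ ∑ j ∈ Finset.range m, ‖cyclicComp P (j + 1) x - cyclicComp P j x‖ ^ 2 := by
        apply Finset.sum_le_sum_of_subset_of_nonneg
        · intro j hj
          exact Finset.mem_range.2 (Finset.mem_Ico.1 hj).2
        · intro j _ _; exact sq_nonneg _
      have hcard : ((Finset.Ico (i.1 + 1) m).card : ℝ) = ((m - (i.1 + 1) : ℕ) : ℝ) := by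
        rw [Nat.card_Ico]
      calc infDist y (C i) ^ 2
          ≤ ((Finset.Ico (i.1 + 1) m).card : ℝ) * ∑ j ∈ Finset.Ico (i.1 + 1) m,
            ‖cyclicComp P (j + 1) x - cyclicComp P j x‖ ^ 2 := le_trans h4 h5
        _ ≤ ((m - (i.1 + 1) : ℕ) : ℝ) * (2 * ‖y - x‖ * infDist x (⋂ i, C i)) := by
            rw [hcard]
            have hc0 : (0 : ℝ) ≤ ((m - (i.1 + 1) : ℕ) : ℝ) := Nat.cast_nonneg _
            exact mul_le_mul_of_nonneg_left (le_trans h6 hSf) hc0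
    -- backward estimate
    have hsqb : infDist y (C i) ^ 2 ≤ ((i.1 + 1 : ℕ) : ℝ) *
        (2 * ‖y - x‖ * infDist x (⋂ i, C i)) := by
      have hmemb : cyclicComp P (i.1 + 1) y ∈ C i := cyclicComp_mem hP i.2 y
      have h1 : infDist y (C i) ≤ ‖y - cyclicComp P (i.1 + 1) y‖ := by
        have h0 := infDist_le_dist_of_mem (x := y) hmemb
        rwa [dist_eq_norm] at h0
      have h2 : cyclicComp P (i.1 + 1) y - y = ∑ j ∈ Finset.range (i.1 + 1),
          (cyclicComp P (j + 1) y - cyclicComp P j y) := by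
        rw [Finset.sum_range_sub (fun j => cyclicComp P j y)]
        rfl
      have h3 : infDist y (C i) ≤ ∑ j ∈ Finset.range (i.1 + 1),
          ‖cyclicComp P (j + 1) y - cyclicComp P j y‖ := by
        calc infDist y (C i) ≤ ‖y - cyclicComp P (i.1 + 1) y‖ := h1
          _ = ‖cyclicComp P (i.1 + 1) y - y‖ := norm_sub_rev _ _
          _ = ‖∑ j ∈ Finset.range (i.1 + 1),
              (cyclicComp P (j + 1) y - cyclicComp P j y)‖ := by rw [h2]
          _ ≤ _ := norm_sum_le _ _
      have h4 : infDist y (C i) ^ 2 ≤ (∑ j ∈ Finset.range (i.1 + 1),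
          ‖cyclicComp P (j + 1) y - cyclicComp P j y‖) ^ 2 :=
        pow_le_pow_left₀ infDist_nonneg h3 2
      have h5 := sq_sum_le_card_mul_sum_sq
        (s := Finset.range (i.1 + 1))
        (f := fun j => ‖cyclicComp P (j + 1) y - cyclicComp P j y‖)
      have h6 : ∑ j ∈ Finset.range (i.1 + 1),
          ‖cyclicComp P (j + 1) y - cyclicComp P j y‖ ^ 2
          ≤ ∑ j ∈ Finset.range m, ‖cyclicComp P (j + 1) y - cyclicComp P j y‖ ^ 2 := by
        apply Finset.sum_le_sum_of_subset_of_nonneg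
        · exact Finset.range_subset_range.2 hi1
        · intro j _ _; exact sq_nonneg _
      calc infDist y (C i) ^ 2
          ≤ ((Finset.range (i.1 + 1)).card : ℝ) * ∑ j ∈ Finset.range (i.1 + 1),
            ‖cyclicComp P (j + 1) y - cyclicComp P j y‖ ^ 2 := le_trans h4 h5
        _ ≤ ((i.1 + 1 : ℕ) : ℝ) * (2 * ‖y - x‖ * infDist x (⋂ i, C i)) := by
            rw [Finset.card_range]
            exact mul_le_mul_of_nonneg_left (le_trans h6 hSb) (Nat.cast_nonneg _)
    rcases min_cases (m - (i.1 + 1)) (i.1 + 1) with ⟨hmin, _⟩ | ⟨hmin, _⟩ <;> rw [hmin]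
    · exact hsqf
    · exact hsqb
  -- assemble
  have hsum : ∑ i : Fin m, infDist y (C i) ^ 2
      ≤ ((∑ i ∈ Finset.range m, min (m - (i + 1)) (i + 1) : ℕ) : ℝ) *
        (2 * ‖y - x‖ * infDist x (⋂ i, C i)) := by
    calc ∑ i : Fin m, infDist y (C i) ^ 2
        ≤ ∑ i : Fin m, ((min (m - (i.1 + 1)) (i.1 + 1) : ℕ) : ℝ) *
          (2 * ‖y - x‖ * infDist x (⋂ i, C i)) := Finset.sum_le_sum fun i _ => hper i
      _ = ((∑ i ∈ Finset.range m, min (m - (i + 1)) (i + 1) : ℕ) : ℝ) *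
          (2 * ‖y - x‖ * infDist x (⋂ i, C i)) := by
          rw [← Finset.sum_mul]
          congr 1
          rw [Nat.cast_sum]
          exact Fin.sum_univ_eq_sum_range
            (fun j => ((min (m - (j + 1)) (j + 1) : ℕ) : ℝ)) m
  have hN : ((∑ i ∈ Finset.range m, min (m - (i + 1)) (i + 1) : ℕ) : ℝ)
      ≤ (m : ℝ) * m / 4 := by
    have h4 : ((4 * ∑ i ∈ Finset.range m, min (m - (i + 1)) (i + 1) : ℕ) : ℝ)
        ≤ ((m * m : ℕ) : ℝ) := Nat.cast_le.2 (minsum m)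
    push_cast at h4 ⊢
    linarith
  have hsum' : ∑ i : Fin m, infDist y (C i) ^ 2
      ≤ ((m : ℝ) * m / 4) * (2 * ‖y - x‖ * infDist x (⋂ i, C i)) :=
    le_trans hsum (mul_le_mul_of_nonneg_right hN hD0)
  have hsn : (0 : ℝ) ≤ ∑ i : Fin m, infDist y (C i) ^ 2 :=
    Finset.sum_nonneg fun i _ => sq_nonneg _
  calc ((1 : ℝ) / m) * ∑ i : Fin m, infDist y (C i) ^ 2
      ≤ ((1 : ℝ) / m) * (((m : ℝ) * m / 4) * (2 * ‖y - x‖ * infDist x (⋂ i, C i))) :=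
        mul_le_mul_of_nonneg_left hsum' (by positivity)
    _ = ((m : ℝ) / 2) * ‖y - x‖ * infDist x (⋂ i, C i) := by
        field_simp
        ring
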